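/- arXiv:1710.04574 — 6 statements merged into one kernel-verified Lean document; each statement's English description precedes it below -/
import Mathlib

section
/- Ray-Chaudhuri–Wilson inequality: for every t-(v,u,λ) design with b blocks and every s ≤ min(t/2, v−u), we have b ≥ C(v,s). -/
/-!
The incidence vectors `e_S ∈ ℚ^ι` (`e_S i = 1` iff `S ⊆ B i`) of the `s`-subsets `S` are
linearly independent, whence `C(v, s) ≤ b`. Because `2s ≤ t`, the number of blocks containing
`Y` and missing `Z` (disjoint, `|Y| + |Z| = 2s`) depends only on `|Z|`, by induction on `|Z|`
starting from the fact that the number of blocks through an `a`-set, `a ≤ t`, depends only on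
`a`; call it `q |Z|`. Then `⟨e_S, e_T⟩ = ∑_{W ⊆ S ∩ T} q |W|`, so the Gram matrix is `∑_W q |W| · 1_W 1_Wᵀ` with
`1_W S = [W ⊆ S]`: a nonnegative combination of rank-one positive semidefinite matrices, whose
terms with `|W| = s` already add up to `q s • 1`. Finally `q s > 0` because `s ≤ v - u`.
-/

open Finset

theorem sum_mul_sq_sum_eq_sum_sum {𝕜 P K : Type*} [CommSemiring 𝕜] [Fintype P] [Fintype K]
    (c : K → 𝕜) (f : K → P → 𝕜) (g : P → 𝕜) :
    ∑ k, c k * (∑ S, g S * f k S) ^ 2 = ∑ S, ∑ T, g S * g T * ∑ k, c k * (f k S * f k T) := by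
  simp only [sq, sum_mul_sum]
  simp only [mul_sum]
  rw [sum_comm]
  refine sum_congr rfl fun S _ => ?_
  rw [sum_comm]
  exact sum_congr rfl fun T _ => sum_congr rfl fun k _ => by ring

theorem linearIndependent_of_inner_eq_sum_sq {𝕜 P ι K : Type*} [Field 𝕜] [LinearOrder 𝕜]
    [IsStrictOrderedRing 𝕜] [Fintype P] [Fintype ι] [Fintype K]
    (e : P → ι → 𝕜) (c : K → 𝕜) (f : K → P → 𝕜)
    (hc : ∀ k, 0 ≤ c k) (hinner : ∀ S T, ∑ i, e S i * e T i = ∑ k, c k * (f k S * f k T))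
    (hdiag : ∀ S, ∃ k, 0 < c k ∧ f k S = 1 ∧ ∀ T ≠ S, f k T = 0) :
    LinearIndependent 𝕜 e := by
  rw [Fintype.linearIndependent_iff]
  intro g hg S
  have hcomb (i : ι) : ∑ S, g S * e S i = 0 := by
    simpa using congrFun hg i
  have hquad : ∑ k, c k * (∑ T, g T * f k T) ^ 2 = 0 := by
    have hexp := sum_mul_sq_sum_eq_sum_sum (fun _ : ι => (1 : 𝕜)) (fun i S => e S i) g
    simp only [one_mul, hcomb] at hexp
    simp only [sum_mul_sq_sum_eq_sum_sum, ← hinner, ← hexp]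
    simp
  obtain ⟨k, hk, hkS, hkT⟩ := hdiag S
  have hterm := (sum_eq_zero_iff_of_nonneg fun k _ => mul_nonneg (hc k) (sq_nonneg _)).mp
    hquad k (mem_univ k)
  rw [Fintype.sum_eq_single S fun T hT => by rw [hkT T hT, mul_zero], hkS, mul_one] at hterm
  exact pow_eq_zero_iff two_ne_zero |>.mp ((mul_eq_zero.mp hterm).resolve_left hk.ne')

section Blocks

variable {V ι : Type*} [DecidableEq V] [Fintype ι] (B : ι → Finset V)

def blockCount (Y Z : Finset V) : ℕ := #{i | Y ⊆ B i ∧ Disjoint Z (B i)}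

theorem blockCount_empty_right (Y : Finset V) : blockCount B Y ∅ = #{i | Y ⊆ B i} := by
  simp [blockCount]

theorem blockCount_insert_add (Y Z : Finset V) (z : V) :
    blockCount B Y (insert z Z) + blockCount B (insert z Y) Z = blockCount B Y Z := by
  rw [blockCount, blockCount, blockCount, ← card_filter_add_card_filter_not
    (s := {i | Y ⊆ B i ∧ Disjoint Z (B i)}) (p := fun i => z ∈ B i), add_comm]
  simp only [filter_filter, insert_subset_iff, disjoint_insert_left]
  congr 2 <;> ext i <;> simp only [mem_filter, mem_univ, true_and] <;> tauto

theorem card_filter_superset_mul_choose [Fintype V] {u t lam : ℕ} (huni : ∀ i, #(B i) = u)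
    (hdes : ∀ T : Finset V, #T = t → #{i | T ⊆ B i} = lam) {Y : Finset V} (hY : #Y ≤ t) :
    #{i | Y ⊆ B i} * (u - #Y).choose (t - #Y) = (Fintype.card V - #Y).choose (t - #Y) * lam := by
  have := card_mul_eq_card_mul (fun i T => T ⊆ B i) (s := {i | Y ⊆ B i})
    (t := (univ.powersetCard t).filter (Y ⊆ ·)) (m := (u - #Y).choose (t - #Y)) (n := lam)
    (fun i hi => ?_) (fun T hT => ?_)
  · rwa [card_filter_powersetCard_subset Y univ t (subset_univ Y) hY, card_univ] at this
  · rw [mem_filter] at hi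
    rw [← huni i, ← card_filter_powersetCard_subset Y (B i) t hi.2 hY, bipartiteAbove]
    congr 1; ext T; simp only [mem_filter, mem_powersetCard, subset_univ, true_and]; tauto
  · simp only [mem_filter, mem_powersetCard] at hT
    rw [← hdes T hT.1.2, bipartiteBelow, filter_filter]
    congr 1; ext i; simp only [mem_filter, mem_univ, true_and]
    exact ⟨fun h => h.2, fun h => ⟨hT.2.trans h, h⟩⟩

theorem card_filter_superset_eq_of_card_eq [Fintype V] {u t lam : ℕ} (htu : t ≤ u)
    (huni : ∀ i, #(B i) = u) (hdes : ∀ T : Finset V, #T = t → #{i | T ⊆ B i} = lam)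
    {Y Y' : Finset V} (hYY' : #Y = #Y') (hY : #Y ≤ t) :
    #{i | Y ⊆ B i} = #{i | Y' ⊆ B i} := by
  refine Nat.eq_of_mul_eq_mul_right (Nat.choose_pos (Nat.sub_le_sub_right htu #Y)) ?_
  rw [card_filter_superset_mul_choose B huni hdes hY, hYY',
    card_filter_superset_mul_choose B huni hdes (hYY' ▸ hY)]

theorem blockCount_eq_of_card_eq [Fintype V] {u t lam : ℕ} (htu : t ≤ u)
    (huni : ∀ i, #(B i) = u) (hdes : ∀ T : Finset V, #T = t → #{i | T ⊆ B i} = lam)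
    {Y Z Y' Z' : Finset V} (hYZ : Disjoint Y Z) (hYZ' : Disjoint Y' Z')
    (hYY' : #Y = #Y') (hZZ' : #Z = #Z') (ht : #Y + #Z ≤ t) :
    blockCount B Y Z = blockCount B Y' Z' := by
  induction hc : #Z generalizing Y Z Y' Z' with
  | zero =>
    rw [card_eq_zero.mp hc, card_eq_zero.mp (hZZ'.symm.trans hc), blockCount_empty_right,
      blockCount_empty_right]
    exact card_filter_superset_eq_of_card_eq B htu huni hdes hYY' (by omega)
  | succ c ih =>
    obtain ⟨z, hz⟩ := card_pos.mp (show 0 < #Z by omega)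
    obtain ⟨z', hz'⟩ := card_pos.mp (show 0 < #Z' by omega)
    have hzY : z ∉ Y := disjoint_right.mp hYZ hz
    have hzY' : z' ∉ Y' := disjoint_right.mp hYZ' hz'
    have hc₁ : #(Z.erase z) = c := by rw [card_erase_of_mem hz]; omega
    have hc₂ : #(Z'.erase z') = c := by rw [card_erase_of_mem hz']; omega
    have h₁ : blockCount B Y (Z.erase z) = blockCount B Y' (Z'.erase z') :=
      ih (hYZ.mono_right (erase_subset z Z)) (hYZ'.mono_right (erase_subset z' Z')) hYY'
        (hc₁.trans hc₂.symm) (by omega) hc₁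
    have h₂ : blockCount B (insert z Y) (Z.erase z) =
        blockCount B (insert z' Y') (Z'.erase z') :=
      ih (disjoint_insert_left.mpr ⟨notMem_erase z Z, hYZ.mono_right (erase_subset z Z)⟩)
        (disjoint_insert_left.mpr ⟨notMem_erase z' Z', hYZ'.mono_right (erase_subset z' Z')⟩)
        (by rw [card_insert_of_notMem hzY, card_insert_of_notMem hzY', hYY'])
        (hc₁.trans hc₂.symm) (by rw [card_insert_of_notMem hzY]; omega) hc₁
    have e₁ := blockCount_insert_add B Y (Z.erase z) z
    have e₂ := blockCount_insert_add B Y' (Z'.erase z') z'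
    rw [insert_erase hz] at e₁
    rw [insert_erase hz'] at e₂
    omega

theorem exists_blockCount_eq_of_card_add_eq [Fintype V] {u t lam n : ℕ} (htu : t ≤ u)
    (huni : ∀ i, #(B i) = u) (hdes : ∀ T : Finset V, #T = t → #{i | T ⊆ B i} = lam)
    (hnt : n ≤ t) :
    ∃ q : ℕ → ℕ, ∀ Y Z, Disjoint Y Z → #Y + #Z = n → blockCount B Y Z = q #Z := by
  have (j : ℕ) : ∃ c, ∀ Y Z, Disjoint Y Z → #Y + #Z = n → #Z = j → blockCount B Y Z = c := by
    by_cases h : ∃ Y Z : Finset V, Disjoint Y Z ∧ #Y + #Z = n ∧ #Z = j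
    · obtain ⟨Y₀, Z₀, hd₀, hn₀, hj₀⟩ := h
      exact ⟨blockCount B Y₀ Z₀, fun Y Z hd hn hj =>
        blockCount_eq_of_card_eq B htu huni hdes hd hd₀ (by omega) (hj.trans hj₀.symm)
          (by omega)⟩
    · exact ⟨0, fun Y Z hd hn hj => (h ⟨Y, Z, hd, hn, hj⟩).elim⟩
  choose q hq using this
  exact ⟨q, fun Y Z hd hn => hq _ Y Z hd hn rfl⟩

theorem exists_blockCount_pos [Fintype V] {u t lam s : ℕ} (htu : t ≤ u)
    (huV : u ≤ Fintype.card V) (hlam : 0 < lam) (huni : ∀ i, #(B i) = u)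
    (hdes : ∀ T : Finset V, #T = t → #{i | T ⊆ B i} = lam)
    (hst : s ≤ t) (hsu : s ≤ Fintype.card V - u) :
    ∃ Y Z, Disjoint Y Z ∧ #Y = s ∧ #Z = s ∧ 0 < blockCount B Y Z := by
  obtain ⟨T, -, hT⟩ := exists_subset_card_eq (s := (univ : Finset V)) (n := t)
    (by rw [card_univ]; omega)
  obtain ⟨i, hi⟩ := card_pos.mp ((hdes T hT).symm ▸ hlam)
  have hTi : T ⊆ B i := (mem_filter.mp hi).2
  obtain ⟨Y, hYT, hY⟩ := exists_subset_card_eq (s := T) (n := s) (by omega)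
  obtain ⟨Z, hZi, hZ⟩ := exists_subset_card_eq (s := (B i)ᶜ) (n := s)
    (by rw [card_compl, huni]; exact hsu)
  have hZi' : Disjoint Z (B i) := disjoint_of_subset_left hZi disjoint_compl_left
  refine ⟨Y, Z, disjoint_of_subset_left (hYT.trans hTi) hZi'.symm, hY, hZ,
    card_pos.mpr ⟨i, mem_filter.mpr ⟨mem_univ i, hYT.trans hTi, hZi'⟩⟩⟩

theorem card_filter_superset_eq_sum_blockCount (A D : Finset V) :
    #{i | A ⊆ B i} = ∑ Z ∈ D.powerset, blockCount B (A ∪ (D \ Z)) Z := by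
  rw [card_eq_sum_card_fiberwise (f := fun i => D \ B i) (t := D.powerset)
    fun i _ => mem_powerset.mpr sdiff_subset]
  refine sum_congr rfl fun Z hZ => ?_
  rw [mem_powerset] at hZ
  rw [blockCount, filter_filter]
  congr 1
  ext i
  simp only [mem_filter, mem_univ, true_and, union_subset_iff]
  constructor
  · rintro ⟨hA, rfl⟩
    exact ⟨⟨hA, by rw [sdiff_sdiff_right_self]; exact inter_subset_right⟩, sdiff_disjoint⟩
  · rintro ⟨⟨hA, hDZ⟩, hZB⟩
    refine ⟨hA, ?_⟩
    ext x
    simp only [mem_sdiff]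
    constructor
    · rintro ⟨hxD, hxB⟩
      by_contra hxZ
      exact hxB (hDZ (mem_sdiff.mpr ⟨hxD, hxZ⟩))
    · exact fun hxZ => ⟨hZ hxZ, disjoint_left.mp hZB hxZ⟩

theorem card_filter_union_subset_eq_sum [Fintype V] {n : ℕ} {q : ℕ → ℕ}
    (hq : ∀ Y Z, Disjoint Y Z → #Y + #Z = n → blockCount B Y Z = q #Z)
    {S T : Finset V} (hST : #S + #T = n) (hn : n ≤ Fintype.card V) :
    #{i | S ∪ T ⊆ B i} = ∑ W ∈ (S ∩ T).powerset, q #W := by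
  have hcard := card_union_add_card_inter S T
  obtain ⟨D, hD, hDcard⟩ := exists_subset_card_eq (s := (S ∪ T)ᶜ) (n := #(S ∩ T))
    (by rw [card_compl]; omega)
  have hDST : Disjoint (S ∪ T) D := disjoint_of_subset_right hD disjoint_compl_right
  -- sort the blocks through `S ∪ T` by the part `Z ⊆ D` that they miss
  rw [card_filter_superset_eq_sum_blockCount B (S ∪ T) D]
  have hterm : ∀ Z ∈ D.powerset, blockCount B (S ∪ T ∪ (D \ Z)) Z = q #Z := by
    intro Z hZ
    rw [mem_powerset] at hZ
    refine hq _ _ (disjoint_union_left.mpr ⟨disjoint_of_subset_right hZ hDST, sdiff_disjoint⟩) ?_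
    rw [card_union_of_disjoint (disjoint_of_subset_right sdiff_subset hDST),
      card_sdiff_of_subset hZ, hDcard]
    have := card_le_card hZ
    omega
  rw [sum_congr rfl hterm, sum_powerset_apply_card, sum_powerset_apply_card, hDcard]

theorem linearIndependent_incidence [Fintype V] {s : ℕ} {q : ℕ → ℕ}
    (hq : ∀ Y Z, Disjoint Y Z → #Y + #Z = 2 * s → blockCount B Y Z = q #Z)
    (hqs : 0 < q s) (hs : 2 * s ≤ Fintype.card V) :
    LinearIndependent ℚ fun (S : {S : Finset V // #S = s}) (i : ι) =>
      if S.1 ⊆ B i then (1 : ℚ) else 0 := by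
  refine linearIndependent_of_inner_eq_sum_sq _ (fun W : Finset V => (q #W : ℚ))
    (fun W S => if W ⊆ S.1 then 1 else 0) (fun W => Nat.cast_nonneg _) (fun S T => ?_)
    (fun S => ⟨S.1, by exact_mod_cast S.2 ▸ hqs, if_pos subset_rfl, fun T hT => if_neg ?_⟩)
  · have hgram := card_filter_union_subset_eq_sum B hq (S := T.1) (T := S.1) (by omega) hs
    simp only [mul_ite, mul_one, mul_zero, ← ite_and, ← union_subset_iff,
      ← subset_inter_iff, sum_ite, sum_const_zero, add_zero, sum_const, nsmul_one]
    rw [hgram, filter_subset_univ, Nat.cast_sum]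
  · exact fun hST => hT (Subtype.ext (eq_of_subset_of_card_le hST (by rw [S.2, T.2])).symm)

end Blocks

/-- Ray-Chaudhuri–Wilson: a `t-(v,u,λ)` design with `b` blocks satisfies
`b ≥ C(v,s)` for every `s ≤ min(t/2, v−u)`. -/
theorem stmt_6 {V ι : Type*} [Fintype V] [Fintype ι]
    (v u t lam b s : ℕ) (hv : Fintype.card V = v) (hb : Fintype.card ι = b)
    (B : ι → Finset V) (huni : ∀ i, (B i).card = u)
    (htu : t ≤ u) (huv : u ≤ v) (hlam : 1 ≤ lam)
    (hdesign : ∀ T : Finset V, T.card = t → Nat.card {i : ι // T ⊆ B i} = lam)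
    (hs1 : 2 * s ≤ t) (hs2 : s ≤ v - u) :
    Nat.choose v s ≤ b := by
  classical
  have hdes (T : Finset V) (hT : #T = t) : #{i | T ⊆ B i} = lam := by
    rw [← hdesign T hT, Nat.card_eq_fintype_card, Fintype.card_subtype]
  obtain ⟨q, hq⟩ := exists_blockCount_eq_of_card_add_eq B htu huni hdes hs1
  obtain ⟨Y, Z, hYZ, hY, hZ, hpos⟩ :=
    exists_blockCount_pos B htu (hv ▸ huv) hlam huni hdes (by omega) (hv ▸ hs2)
  have hqs : 0 < q s := hZ ▸ hq Y Z hYZ (by omega) ▸ hpos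
  calc v.choose s = Fintype.card {S : Finset V // #S = s} := by rw [Fintype.card_finset_len, hv]
    _ ≤ Module.finrank ℚ (ι → ℚ) :=
      (linearIndependent_incidence B hq hqs (by omega)).fintype_card_le_finrank
    _ = b := by rw [Module.finrank_fintype_fun_eq_card, hb]
end

section
/- Let X = (V₁, V₂; A) be a nonempty, non-complete semiregular bipartite graph. Then no twin class in V₁ has more than |V₁|/2 elements, where two vertices x,y ∈ V₁ are twins if they have exactly the same neighborhood in V₂. -/
/-!
Regularity on `V₁` forces every `x ∈ V₁` to have both a neighbour `y₁` and a non-neighbour `y₂`.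
The twin class of `x` lies inside the neighbourhood of `y₁` and is disjoint from that of `y₂`;
since both neighbourhoods have the same size `d₂`, the class has at most `d₂` elements and its
complement at least `d₂`.
-/

section TwinClass

variable {V₁ V₂ : Type*} {A : V₁ → V₂ → Prop}

variable (A) in
def twinClass (x : V₁) : Set V₁ := {x' | ∀ y, A x' y ↔ A x y}

theorem twinClass_subset_of_adj {x : V₁} {y : V₂} (h : A x y) :
    twinClass A x ⊆ {x' | A x' y} :=
  fun _ hx' => (hx' y).2 h

theorem subset_compl_twinClass_of_not_adj {x : V₁} {y : V₂} (h : ¬ A x y) :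
    {x' | A x' y} ⊆ (twinClass A x)ᶜ :=
  fun _ hx' htwin => h ((htwin y).1 hx')

theorem exists_adj_of_ncard_eq [Finite V₂] {d : ℕ} (hdeg : ∀ x, {y | A x y}.ncard = d)
    (hne : ∃ x y, A x y) (x : V₁) : ∃ y, A x y := by
  obtain ⟨x₀, y₀, h₀⟩ := hne
  have hpos : 0 < {y | A x y}.ncard := by
    rw [hdeg x, ← hdeg x₀]
    exact (Set.ncard_pos).2 ⟨y₀, h₀⟩
  exact (Set.ncard_pos).1 hpos

theorem exists_not_adj_of_ncard_eq [Finite V₂] {d : ℕ} (hdeg : ∀ x, {y | A x y}.ncard = d)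
    (hnc : ∃ x y, ¬ A x y) (x : V₁) : ∃ y, ¬ A x y :=
  exists_adj_of_ncard_eq (A := fun x y => ¬ A x y) (d := Nat.card V₂ - d)
    (fun x => hdeg x ▸ Set.ncard_compl {y | A x y}) hnc x

theorem two_mul_ncard_twinClass_le [Finite V₁] {d : ℕ} (hdeg : ∀ y, {x | A x y}.ncard = d)
    {x : V₁} {y₁ y₂ : V₂} (hadj : A x y₁) (hnadj : ¬ A x y₂) :
    2 * (twinClass A x).ncard ≤ Nat.card V₁ :=
  calc 2 * (twinClass A x).ncard
      ≤ {x' | A x' y₁}.ncard + (twinClass A x).ncard := by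
        rw [two_mul]
        exact Nat.add_le_add_right (Set.ncard_le_ncard (twinClass_subset_of_adj hadj)) _
    _ = {x' | A x' y₂}.ncard + (twinClass A x).ncard := by rw [hdeg, hdeg]
    _ ≤ (twinClass A x)ᶜ.ncard + (twinClass A x).ncard :=
        Nat.add_le_add_right (Set.ncard_le_ncard (subset_compl_twinClass_of_not_adj hnadj)) _
    _ = Nat.card V₁ := Set.ncard_compl_add_ncard _

end TwinClass

/-- In a nonempty, non-complete semiregular bipartite graph `(V₁,V₂;A)`, no
twin class in `V₁` has more than `|V₁|/2` elements. -/
theorem stmt_7 {V₁ V₂ : Type*} [Fintype V₁] [Fintype V₂]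
    (A : V₁ → V₂ → Prop)
    (hne : ∃ x y, A x y) (hnc : ∃ x y, ¬ A x y)
    (hsemi₁ : ∃ d₁, ∀ x : V₁, Nat.card {y : V₂ // A x y} = d₁)
    (hsemi₂ : ∃ d₂, ∀ y : V₂, Nat.card {x : V₁ // A x y} = d₂) :
    ∀ x : V₁, 2 * Nat.card {x' : V₁ // ∀ y, A x' y ↔ A x y} ≤ Fintype.card V₁ := by
  intro x
  obtain ⟨d₁, hdeg₁⟩ := hsemi₁
  obtain ⟨d₂, hdeg₂⟩ := hsemi₂
  obtain ⟨y₁, hadj⟩ := exists_adj_of_ncard_eq hdeg₁ hne x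
  obtain ⟨y₂, hnadj⟩ := exists_not_adj_of_ncard_eq hdeg₁ hnc x
  rw [← Nat.card_eq_fintype_card]
  exact two_mul_ncard_twinClass_le hdeg₂ hadj hnadj
end

section
/- No large trivial substructure: let (Γ,c) be a classical coherent configuration with unique vertex color (homogeneous) that is not a clique. Then there is no subset B ⊆ Γ with |B| > |Γ|/2 such that all off-diagonal pairs in B² have the same color. -/
/-!
Let `k` be the color of the off-diagonal pairs of `B`, and pick an off-diagonal color `m ≠ k`,
which exists because the configuration is not a clique. Coherence at diagonal pairs, together with
homogeneity, makes the digraph of `m`-colored arcs regular: every vertex has the same out-degree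
`d ≥ 1` and the same in-degree, which double counting forces to be `d` as well. No `m`-arc lies
inside `B`, so the `|B| d` arcs leaving `B` all end in the complement, which receives at most
`(|Γ| - |B|) d` arcs; hence `2 |B| ≤ |Γ|`.
-/

open Finset

section RegularDigraph

variable {α : Type*} [Fintype α] (r : α → α → Prop) [DecidableRel r]

theorem outDegree_eq_inDegree_of_regular [Nonempty α] {d d' : ℕ}
    (hout : ∀ a, #{b | r a b} = d) (hin : ∀ b, #{a | r a b} = d') : d = d' := by
  have hcount := sum_card_bipartiteAbove_eq_sum_card_bipartiteBelow r (s := univ) (t := univ)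
  simp only [bipartiteAbove, bipartiteBelow, hout, hin, sum_const, card_univ, smul_eq_mul]
    at hcount
  exact Nat.eq_of_mul_eq_mul_left Fintype.card_pos hcount

theorem card_mul_le_card_compl_mul [DecidableEq α] {d d' : ℕ}
    (hout : ∀ a, #{b | r a b} = d) (hin : ∀ b, #{a | r a b} = d')
    (s : Finset α) (hs : ∀ a ∈ s, ∀ b ∈ s, ¬ r a b) : #s * d ≤ #sᶜ * d' := by
  have hcount := sum_card_bipartiteAbove_eq_sum_card_bipartiteBelow r (s := s) (t := sᶜ)
  have hleave : ∀ a ∈ s, #(bipartiteAbove r sᶜ a) = d := fun a ha => by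
    rw [← hout a, bipartiteAbove]
    congr 1
    ext b
    simpa using fun hab hb => hs a ha b hb hab
  have henter : ∀ b ∈ sᶜ, #(bipartiteBelow r s b) ≤ d' := fun b _ =>
    hin b ▸ card_le_card (filter_subset_filter _ (subset_univ s))
  calc #s * d = ∑ a ∈ s, #(bipartiteAbove r sᶜ a) := by
        rw [sum_congr rfl hleave, sum_const, smul_eq_mul]
    _ = ∑ b ∈ sᶜ, #(bipartiteBelow r s b) := hcount
    _ ≤ ∑ _b ∈ sᶜ, d' := sum_le_sum henter
    _ = #sᶜ * d' := by rw [sum_const, smul_eq_mul]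

theorem two_mul_card_le_of_regular [DecidableEq α] {d d' : ℕ} (hd : 0 < d)
    (hout : ∀ a, #{b | r a b} = d) (hin : ∀ b, #{a | r a b} = d')
    (s : Finset α) (hs : ∀ a ∈ s, ∀ b ∈ s, ¬ r a b) : 2 * #s ≤ Fintype.card α := by
  rcases isEmpty_or_nonempty α with hα | hα
  · simp [Finset.eq_empty_of_isEmpty s]
  obtain rfl := outDegree_eq_inDegree_of_regular r hout hin
  have hle := card_mul_le_card_compl_mul r hout hin s hs
  rw [card_compl] at hle
  have := Nat.le_of_mul_le_mul_right hle hd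
  have := card_le_univ s
  omega

end RegularDigraph

section CoherentConfiguration

variable {Γ 𝒞 : Type*} [Fintype Γ] {c : Γ → Γ → 𝒞}
  (hsymm : ∀ x y x' y' : Γ, c x y = c x' y' → c y x = c y' x')
  (hcoh : ∀ (r s : 𝒞) (x y x' y' : Γ), c x y = c x' y' →
    Nat.card {z : Γ // c x z = r ∧ c z y = s} = Nat.card {z : Γ // c x' z = r ∧ c z y' = s})
  (hhom : ∀ x y : Γ, c x x = c y y)
include hsymm hcoh hhom

-- The out-degree of the color `c x₀ y₀` at `u` is the intersection number at `(u, u)` for that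
-- color and its reverse `c y₀ x₀`; by homogeneity all pairs `(u, u)` have the same color.
theorem card_color_out_eq [DecidableEq 𝒞] (x₀ y₀ u u' : Γ) :
    #{v | c u v = c x₀ y₀} = #{v | c u' v = c x₀ y₀} := by
  have hrev : ∀ w, #{v | c w v = c x₀ y₀} = #{v | c w v = c x₀ y₀ ∧ c v w = c y₀ x₀} :=
    fun w => by congr 1; ext v; simpa using fun h => hsymm w v x₀ y₀ h
  rw [hrev, hrev]
  simpa only [Nat.card_eq_fintype_card, Fintype.card_subtype] using hcoh _ _ u u u' u' (hhom u u')

theorem card_color_in_eq [DecidableEq 𝒞] (x₀ y₀ v v' : Γ) :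
    #{u | c u v = c x₀ y₀} = #{u | c u v' = c x₀ y₀} := by
  have hrev : ∀ w, #{u | c u w = c x₀ y₀} = #{u | c w u = c y₀ x₀ ∧ c u w = c x₀ y₀} :=
    fun w => by congr 1; ext u; simpa using fun h => hsymm u w x₀ y₀ h
  rw [hrev, hrev]
  simpa only [Nat.card_eq_fintype_card, Fintype.card_subtype] using hcoh _ _ v v v' v' (hhom v v')

end CoherentConfiguration

/-- No large trivial substructure: a homogeneous classical coherent
configuration that is not a clique has no subset `B` with `|B| > |Γ|/2` on
which all off-diagonal pairs have the same color. -/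
theorem stmt_14 {Γ 𝒞 : Type*} [Fintype Γ] (c : Γ → Γ → 𝒞)
    (hdiag : ∀ x y x' y' : Γ, c x y = c x' y' → (x = y ↔ x' = y'))
    (hsymm : ∀ x y x' y' : Γ, c x y = c x' y' → c y x = c y' x')
    (hcoh : ∀ (r s : 𝒞) (x y x' y' : Γ), c x y = c x' y' →
      Nat.card {z : Γ // c x z = r ∧ c z y = s} =
        Nat.card {z : Γ // c x' z = r ∧ c z y' = s})
    (hhom : ∀ x y : Γ, c x x = c y y)
    (hnotclique : ∃ x y x' y' : Γ, x ≠ y ∧ x' ≠ y' ∧ c x y ≠ c x' y') :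
    ¬ ∃ B : Set Γ, 2 * B.ncard > Fintype.card Γ ∧
      ∀ x ∈ B, ∀ y ∈ B, ∀ x' ∈ B, ∀ y' ∈ B, x ≠ y → x' ≠ y' → c x y = c x' y' := by
  classical
  rintro ⟨B, hB, htriv⟩
  obtain ⟨x₁, y₁, x₂, y₂, hxy₁, hxy₂, hne⟩ := hnotclique
  rw [Set.ncard_eq_toFinset_card'] at hB
  have : 1 < #B.toFinset := by
    have := Fintype.one_lt_card_iff_nontrivial.mpr ⟨⟨x₁, y₁, hxy₁⟩⟩
    omega
  obtain ⟨a, ha, b, hb, hab⟩ := one_lt_card.mp this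
  obtain ⟨x₀, y₀, hxy₀, hk⟩ : ∃ x y, x ≠ y ∧ c x y ≠ c a b := by
    by_cases h : c x₁ y₁ = c a b
    · exact ⟨x₂, y₂, hxy₂, fun h' => hne (h.trans h'.symm)⟩
    · exact ⟨x₁, y₁, hxy₁, h⟩
  have hfree : ∀ u ∈ B.toFinset, ∀ v ∈ B.toFinset, ¬ c u v = c x₀ y₀ := by
    simp only [Set.mem_toFinset]
    intro u hu v hv huv
    by_cases h : u = v
    · exact hxy₀ ((hdiag u v x₀ y₀ huv).mp h)
    · exact hk (huv ▸ htriv u hu v hv a (by simpa using ha) b (by simpa using hb) h hab)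
  have hd : 0 < #{v | c x₀ v = c x₀ y₀} := card_pos.mpr ⟨y₀, by simp⟩
  have := two_mul_card_le_of_regular (fun u v => c u v = c x₀ y₀) hd
    (fun u => card_color_out_eq hsymm hcoh hhom x₀ y₀ u x₀)
    (fun v => card_color_in_eq hsymm hcoh hhom x₀ y₀ v y₀) _ hfree
  omega
end

section
/- Let (Γ,c) be a uniprimitive classical coherent configuration. Then for every edge color r, the complement graph 𝒢̄_r = {(x,y) : x ≠ y, c(x,y) ≠ r} has diameter exactly 2. -/
/-!
Suppose some `r`-edge `(a, b)` had no common neighbour in the complement graph `𝒢̄_r`, i.e. every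
vertex `z` satisfies `c a z = r` or `c z b = r`. If the converse colour `r*` differs from `r`, the
in-neighbourhood of `a` in `𝒢_r` then lies inside that of `b` and misses `a ∈ N⁻(b)`, contradicting
that all in-degrees are equal. If `r* = r`, coherence spreads the covering property to every
`r`-edge, which makes "equal or not `r`-adjacent" an equivalence relation; it contains the edges of
any colour `s ≠ r` (which exists since the configuration is not a clique), and `𝒢_s` is connected,
so it relates `a` and `b`, which are `r`-adjacent.
-/

section CoherentConfiguration

variable {Γ 𝒞 : Type*} {c : Γ → Γ → 𝒞} {r s : 𝒞} {a b x y : Γ}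

def IsCoherent (c : Γ → Γ → 𝒞) : Prop :=
  ∀ (r s : 𝒞) (x y x' y' : Γ), c x y = c x' y' →
    Nat.card {z : Γ // c x z = r ∧ c z y = s} = Nat.card {z : Γ // c x' z = r ∧ c z y' = s}

def Covers (c : Γ → Γ → 𝒞) (r : 𝒞) (u v : Γ) : Prop :=
  ∀ z, c u z = r ∨ c z v = r

theorem IsCoherent.exists_triangle [Finite Γ] (hcoh : IsCoherent c) {x' y' : Γ}
    (h : c x y = c x' y') (z : Γ) : ∃ z', c x' z' = c x z ∧ c z' y' = c z y := by
  have hpos : 0 < Nat.card {w : Γ // c x w = c x z ∧ c w y = c z y} :=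
    Nat.card_pos_iff.mpr ⟨⟨z, rfl, rfl⟩, inferInstance⟩
  rw [hcoh _ _ _ _ _ _ h] at hpos
  obtain ⟨⟨z', hz'⟩⟩ := (Nat.card_pos_iff.mp hpos).1
  exact ⟨z', hz'⟩

theorem Covers.of_color_eq [Finite Γ] (hcoh : IsCoherent c) (hcov : Covers c r a b)
    (h : c x y = c a b) : Covers c r x y := by
  intro z
  obtain ⟨z', hxz, hzy⟩ := hcoh.exists_triangle h z
  exact (hcov z').imp (hxz ▸ id) (hzy ▸ id)

theorem IsCoherent.ncard_inNeighbors_eq (hcoh : IsCoherent c)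
    (hsymm : ∀ x y x' y' : Γ, c x y = c x' y' → c y x = c y' x')
    (hhom : ∀ x y : Γ, c x x = c y y) (hr : c a b = r) (x y : Γ) :
    {z | c z x = r}.ncard = {z | c z y = r}.ncard := by
  have hin : ∀ x, {z | c z x = r} = {z | c x z = c b a ∧ c z x = r} := fun x => by
    ext z
    exact ⟨fun hz => ⟨hsymm z x a b (hz.trans hr.symm), hz⟩, And.right⟩
  rw [hin x, hin y, ← Nat.card_coe_set_eq, ← Nat.card_coe_set_eq]
  exact hcoh _ _ x x y y (hhom x y)

theorem not_covers_of_converse_ne [Finite Γ] (hcoh : IsCoherent c)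
    (hdiag : ∀ x y x' y' : Γ, c x y = c x' y' → (x = y ↔ x' = y'))
    (hsymm : ∀ x y x' y' : Γ, c x y = c x' y' → c y x = c y' x')
    (hhom : ∀ x y : Γ, c x x = c y y) (hab : a ≠ b) (hr : c a b = r) (hba : c b a ≠ r) :
    ¬ Covers c r a b := by
  intro hcov
  have hsub : {z | c z a = r} ⊂ {z | c z b = r} := by
    refine Set.ssubset_iff_of_subset (fun z hz => ?_) |>.mpr ⟨a, hr, fun haa => ?_⟩
    · exact (hcov z).resolve_left fun haz => hba (hsymm a z a b (haz.trans hr.symm) ▸ hz)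
    · exact hab ((hdiag a a a b (haa.trans hr.symm)).mp rfl)
  exact (Set.ncard_lt_ncard hsub).ne (hcoh.ncard_inNeighbors_eq hsymm hhom hr a b)

theorem eq_or_not_adj_trans (hcov : ∀ u v, c u v = r → Covers c r u v) {u w t : Γ}
    (huw : u = w ∨ c u w ≠ r ∧ c w u ≠ r) (hwt : w = t ∨ c w t ≠ r ∧ c t w ≠ r) :
    u = t ∨ c u t ≠ r ∧ c t u ≠ r := by
  rcases huw with rfl | ⟨huw, hwu⟩
  · exact hwt
  rcases hwt with rfl | ⟨hwt, htw⟩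
  · exact Or.inr ⟨huw, hwu⟩
  refine or_iff_not_imp_left.mpr fun _ => ⟨fun hut => ?_, fun htu => ?_⟩
  · exact (hcov u t hut w).elim huw hwt
  · exact (hcov t u htu w).elim htw hwu

theorem eq_or_not_adj_of_reflTransGen (hcov : ∀ u v, c u v = r → Covers c r u v)
    (hsr : s ≠ r) (hsr' : ∀ u v, c u v = s → c v u ≠ r)
    (h : Relation.ReflTransGen (fun u v => c u v = s ∨ c v u = s) x y) :
    x = y ∨ c x y ≠ r ∧ c y x ≠ r := by
  induction h with
  | refl => exact Or.inl rfl
  | tail _ hs ih =>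
    refine eq_or_not_adj_trans hcov ih (Or.inr ?_)
    rcases hs with hs | hs
    · exact ⟨hs ▸ hsr, hsr' _ _ hs⟩
    · exact ⟨hsr' _ _ hs, hs ▸ hsr⟩

theorem covers_of_forall_not_adj (hab : c a b = r)
    (h : ∀ z, z ≠ a → z ≠ b → c a z ≠ r → c z b = r) : Covers c r a b := by
  intro z
  by_cases hza : z = a
  · exact Or.inr (hza ▸ hab)
  by_cases hzb : z = b
  · exact Or.inl (hzb ▸ hab)
  exact or_iff_not_imp_left.mpr (h z hza hzb)

end CoherentConfiguration

/-- In a uniprimitive classical coherent configuration, for every edge color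
`r` the complement graph `𝒢̄_r` has diameter exactly `2`. -/
theorem stmt_15 {Γ 𝒞 : Type*} [Fintype Γ] (c : Γ → Γ → 𝒞)
    (hdiag : ∀ x y x' y' : Γ, c x y = c x' y' → (x = y ↔ x' = y'))
    (hsymm : ∀ x y x' y' : Γ, c x y = c x' y' → c y x = c y' x')
    (hcoh : ∀ (r s : 𝒞) (x y x' y' : Γ), c x y = c x' y' →
      Nat.card {z : Γ // c x z = r ∧ c z y = s} =
        Nat.card {z : Γ // c x' z = r ∧ c z y' = s})
    (hhom : ∀ x y : Γ, c x x = c y y)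
    (hconn : ∀ r : 𝒞, (∃ x y : Γ, x ≠ y ∧ c x y = r) →
      ∀ x y : Γ, Relation.ReflTransGen (fun a b => c a b = r ∨ c b a = r) x y)
    (hnotclique : ∃ x y x' y' : Γ, x ≠ y ∧ x' ≠ y' ∧ c x y ≠ c x' y') :
    ∀ r : 𝒞, (∃ x y : Γ, x ≠ y ∧ c x y = r) →
      ((∀ x y : Γ, x ≠ y →
          (c x y ≠ r ∨ ∃ z : Γ, z ≠ x ∧ z ≠ y ∧ c x z ≠ r ∧ c z y ≠ r)) ∧
        ∃ x y : Γ, x ≠ y ∧ c x y = r) := by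
  rintro r ⟨x, y, hxy, hr⟩
  refine ⟨fun a b hab => ?_, x, y, hxy, hr⟩
  rcases ne_or_eq (c a b) r with hab_r | hab_r
  · exact Or.inl hab_r
  right
  by_contra! hno
  have hcov : Covers c r a b := covers_of_forall_not_adj hab_r hno
  by_cases hba : c b a = r
  · obtain ⟨p, q, hpq, hpq_r⟩ : ∃ p q : Γ, p ≠ q ∧ c p q ≠ r := by
      obtain ⟨x₁, y₁, x₂, y₂, h₁, h₂, hne⟩ := hnotclique
      by_cases h : c x₁ y₁ = r
      · exact ⟨x₂, y₂, h₂, fun h' => hne (h.trans h'.symm)⟩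
      · exact ⟨x₁, y₁, h₁, h⟩
    have hconv : ∀ u v, c u v = c p q → c v u ≠ r := fun u v huv hvu =>
      hpq_r (huv.symm.trans ((hsymm v u a b (hvu.trans hab_r.symm)).trans hba))
    have hall : ∀ u v, c u v = r → Covers c r u v := fun u v huv =>
      hcov.of_color_eq hcoh (huv.trans hab_r.symm)
    rcases eq_or_not_adj_of_reflTransGen hall hpq_r hconv (hconn _ ⟨p, q, hpq, rfl⟩ a b) with
      h | h
    · exact hab h
    · exact h.1 hab_r
  · exact not_covers_of_converse_ne hcoh hdiag hsymm hhom hab hab_r hba hcov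
end

section
/- Let G be a subgroup of Sym_s and N a normal subgroup of G such that G/N is simple. Then G/N is isomorphic to a subgroup of Sym_s. Consequently, every composition factor of a subgroup of Sym_s embeds in Sym_s. -/
/-!
Induct on `|G|` for a finite group `G` acting faithfully on a finite set `α`. Since `G` is
nontrivial, some point `a` has a proper stabilizer `H`. If `HN = G`, then `G/N ≅ H/(H ∩ N)` and
`H` is smaller. Otherwise `M = HN` is a proper subgroup containing `N`; the action of `G` on
`G/M` then factors through the simple group `G/N` and is nontrivial, hence faithful, and
`|G/M| ≤ |G/H| = |orbit a| ≤ |α|`.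
-/

open Equiv MulAction

theorem QuotientGroup.mk'_comp_subtype_surjective {G : Type*} [Group G] {H N : Subgroup G}
    [N.Normal] (h : H ⊔ N = ⊤) : Function.Surjective ((mk' N).comp H.subtype) := by
  rw [← MonoidHom.range_eq_top, MonoidHom.range_comp, Subgroup.range_subtype,
    ← Subgroup.map_top_of_surjective _ (mk'_surjective N), ← h, Subgroup.map_sup,
    map_mk'_self, sup_bot_eq]

theorem QuotientGroup.lift_injective_of_isSimpleGroup {G P : Type*} [Group G] [Group P]
    {N : Subgroup G} [N.Normal] [IsSimpleGroup (G ⧸ N)] {φ : G →* P} (hN : N ≤ φ.ker)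
    (hφ : φ.ker ≠ ⊤) : Function.Injective (lift N φ hN) := by
  rw [← MonoidHom.ker_eq_bot_iff]
  refine (lift N φ hN).normal_ker.eq_bot_or_eq_top.resolve_right fun htop => hφ ?_
  rw [eq_top_iff]
  intro g _
  rw [MonoidHom.mem_ker, ← lift_mk (HN := hN), ← MonoidHom.mem_ker, htop]
  trivial

theorem Subgroup.exists_injective_quotient_toPerm_quotient {G : Type*} [Group G]
    {N M : Subgroup G} [N.Normal] [IsSimpleGroup (G ⧸ N)] (hNM : N ≤ M) (hM : M ≠ ⊤) :
    ∃ f : G ⧸ N →* Perm (G ⧸ M), Function.Injective f := by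
  have hN : N ≤ (toPermHom G (G ⧸ M)).ker := by
    rw [← M.normalCore_eq_ker, Subgroup.normal_le_normalCore]
    exact hNM
  have hker : (toPermHom G (G ⧸ M)).ker ≠ ⊤ := by
    rw [← M.normalCore_eq_ker]
    exact ne_top_of_le_ne_top hM M.normalCore_le
  exact ⟨_, QuotientGroup.lift_injective_of_isSimpleGroup hN hker⟩

theorem Equiv.Perm.exists_injective_of_card_le {β α : Type*} [Finite α] [Finite β]
    (h : Nat.card β ≤ Nat.card α) : ∃ f : Perm β →* Perm α, Function.Injective f := by
  have := Fintype.ofFinite α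
  have := Fintype.ofFinite β
  rw [Nat.card_eq_fintype_card, Nat.card_eq_fintype_card] at h
  obtain ⟨ι⟩ := Function.Embedding.nonempty_of_card_le h
  exact ⟨Perm.viaEmbeddingHom ι, Perm.viaEmbeddingHom_injective ι⟩

theorem MulAction.index_stabilizer_le_card (G : Type*) {α : Type*} [Group G] [MulAction G α]
    [Finite α] (a : α) : (stabilizer G a).index ≤ Nat.card α := by
  rw [index_stabilizer]
  exact Set.ncard_le_card _

theorem MulAction.exists_stabilizer_ne_top (G : Type*) {α : Type*} [Group G] [MulAction G α]
    [FaithfulSMul G α] [Nontrivial G] : ∃ a : α, stabilizer G a ≠ ⊤ := by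
  obtain ⟨g, hg⟩ := exists_ne (1 : G)
  obtain ⟨a, ha⟩ : ∃ a : α, g • a ≠ a := by
    by_contra! h
    exact hg (eq_of_smul_eq_smul fun a => by rw [h a, one_smul])
  exact ⟨a, fun htop => ha (htop ▸ Subgroup.mem_top g : g ∈ stabilizer G a)⟩

theorem MulAction.exists_injective_quotient_toPerm {G α : Type*} [Group G] [MulAction G α]
    [FaithfulSMul G α] [Finite α] (N : Subgroup G) [N.Normal] [IsSimpleGroup (G ⧸ N)] :
    ∃ f : G ⧸ N →* Perm α, Function.Injective f := by
  have : Finite G := Finite.of_injective _ (toPerm_injective (α := G) (β := α))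
  induction hn : Nat.card G using Nat.strong_induction_on generalizing G with
  | _ n ih =>
    have : Nontrivial G := (QuotientGroup.mk'_surjective N).nontrivial
    obtain ⟨a, hH⟩ := exists_stabilizer_ne_top G (α := α)
    set H := stabilizer G a
    by_cases hHN : H ⊔ N = ⊤
    · let φ := (QuotientGroup.mk' N).comp H.subtype
      let e := QuotientGroup.quotientKerEquivOfSurjective φ
        (QuotientGroup.mk'_comp_subtype_surjective hHN)
      have := e.isSimpleGroup
      have hcard : Nat.card H < n :=
        hn ▸ lt_of_le_of_ne H.card_le_card_group (mt H.card_eq_iff_eq_top.mp hH)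
      obtain ⟨f, hf⟩ := ih _ hcard φ.ker inferInstance rfl
      exact ⟨f.comp e.symm.toMonoidHom, hf.comp e.symm.injective⟩
    · obtain ⟨f, hf⟩ := Subgroup.exists_injective_quotient_toPerm_quotient le_sup_right hHN
      have hcard : Nat.card (G ⧸ H ⊔ N) ≤ Nat.card α :=
        (Subgroup.index_antitone le_sup_left).trans (index_stabilizer_le_card G a)
      obtain ⟨g, hg⟩ := Perm.exists_injective_of_card_le hcard
      exact ⟨g.comp f, hg.comp hf⟩

/-- If `G ≤ Sym_s` and `N ⊴ G` with `G/N` simple, then `G/N` embeds into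
`Sym_s`. -/
theorem stmt_17 {s : ℕ} (G : Subgroup (Equiv.Perm (Fin s)))
    (N : Subgroup G) [N.Normal] [IsSimpleGroup (G ⧸ N)] :
    ∃ f : (G ⧸ N) →* Equiv.Perm (Fin s), Function.Injective f :=
  exists_injective_quotient_toPerm N
end

section
/- Let G be a group acting transitively on a finite set R of blocks, and suppose there is a normal subgroup M ⊴ G and integers m ≥ 3, s ≥ 1 with |H| ≤ (m!)^s · s!, m^s ≤ r where r = |R|, [G:M] ≤ 2^s · s!, and |G| ≥ r^{1+log₂ r}. Then [G:M] ≤ r. -/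
/-!
Since `[G:M] ≤ 2^s s!`, it suffices to show `2s ≤ m`: then `2^s s! ≤ (2s)^s ≤ m^s ≤ r`.
If instead `m ≤ 2s - 1`, put `a = log₂ m > 1` and compare base-2 logarithms of `|G|`.
From `log₂ r ≥ s a` the lower bound gives `log₂ |G| ≥ s a (1 + s a)`, while
`m! ≤ m^m / 2^(m-1)` and `s! ≤ 2^((s-1)²)` give
`log₂ |G| ≤ s (m a - m + 1) + (s-1)² ≤ 2 s (s a) - s a - s² + 1`.
The difference of the two bounds is `(s a - s)² + 2 s a - 1 > 0`, a contradiction.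
-/

open scoped Nat
open Real

theorem Nat.factorial_mul_two_pow_le_pow_self : ∀ n : ℕ, n ! * 2 ^ (n - 1) ≤ n ^ n
  | 0 => le_rfl
  | n + 1 => by
    rcases n.eq_zero_or_pos with rfl | hn
    · simp
    have hbern : 2 * n ^ n ≤ (n + 1) ^ n := by
      have := pow_add_mul_le_add_pow (a := n) (b := 1) (Nat.zero_le _) (by omega) n
      rwa [Nat.cast_id, mul_one, mul_pow_sub_one hn.ne', ← two_mul] at this
    have htwo : 2 ^ n = 2 ^ (n - 1) * 2 := by rw [← pow_succ, Nat.sub_add_cancel hn]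
    calc (n + 1)! * 2 ^ (n + 1 - 1) = (n + 1) * (n ! * 2 ^ (n - 1)) * 2 := by
          rw [Nat.factorial_succ, Nat.add_sub_cancel, htwo]; ring
      _ ≤ (n + 1) * n ^ n * 2 := by gcongr; exact Nat.factorial_mul_two_pow_le_pow_self n
      _ = (n + 1) * (2 * n ^ n) := by ring
      _ ≤ (n + 1) ^ (n + 1) := by rw [_root_.pow_succ']; gcongr

theorem Nat.le_two_pow_pred (n : ℕ) : n ≤ 2 ^ (n - 1) := by
  rcases n with _ | n
  · simp
  · exact Nat.lt_two_pow_self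

theorem Nat.factorial_le_two_pow_sq (n : ℕ) : n ! ≤ 2 ^ ((n - 1) ^ 2) := by
  have hpow : n ! * 2 ^ (n - 1) ≤ 2 ^ ((n - 1) ^ 2) * 2 ^ (n - 1) :=
    calc n ! * 2 ^ (n - 1) ≤ n ^ n := Nat.factorial_mul_two_pow_le_pow_self n
      _ ≤ (2 ^ (n - 1)) ^ n := Nat.pow_le_pow_left (Nat.le_two_pow_pred n) n
      _ = 2 ^ ((n - 1) ^ 2) * 2 ^ (n - 1) := by
        rw [← pow_mul, ← pow_add]; congr 1; rcases n with _ | n <;> simp; ring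
  exact Nat.le_of_mul_le_mul_right hpow (by positivity)

theorem Nat.two_pow_mul_factorial_le_pow {m s : ℕ} (h : 2 * s ≤ m) : 2 ^ s * s ! ≤ m ^ s :=
  calc 2 ^ s * s ! ≤ 2 ^ s * s ^ s := Nat.mul_le_mul_left _ (Nat.factorial_le_pow s)
    _ = (2 * s) ^ s := (mul_pow 2 s s).symm
    _ ≤ m ^ s := Nat.pow_le_pow_left h s

theorem Real.logb_two_factorial_add_le {n : ℕ} (hn : 0 < n) :
    logb 2 (n ! : ℝ) + (n - 1) ≤ n * logb 2 n := by
  have h : ((n ! * 2 ^ (n - 1) : ℕ) : ℝ) ≤ ((n ^ n : ℕ) : ℝ) := by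
    exact_mod_cast Nat.factorial_mul_two_pow_le_pow_self n
  have := Real.logb_le_logb_of_le one_lt_two (by positivity) h
  push_cast at this
  rwa [Real.logb_mul (by positivity) (by positivity), Real.logb_pow, Real.logb_pow,
    Real.logb_self_eq_one one_lt_two, mul_one, Nat.cast_pred hn] at this

theorem Real.logb_two_factorial_le_sq {n : ℕ} (hn : 0 < n) :
    logb 2 (n ! : ℝ) ≤ (n - 1) ^ 2 := by
  have h : ((n ! : ℕ) : ℝ) ≤ ((2 ^ ((n - 1) ^ 2) : ℕ) : ℝ) := by
    exact_mod_cast Nat.factorial_le_two_pow_sq n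
  have := Real.logb_le_logb_of_le one_lt_two (by positivity) h
  push_cast at this
  rwa [Real.logb_pow, Real.logb_self_eq_one one_lt_two, mul_one, Nat.cast_pow,
    Nat.cast_pred hn] at this

theorem two_mul_le_of_rpow_one_add_logb_le_factorial {m s r : ℕ} (hm : 3 ≤ m)
    (hs : 1 ≤ s) (hms : m ^ s ≤ r) (h : (r : ℝ) ^ (1 + logb 2 r) ≤ (m ! : ℝ) ^ s * s !) :
    2 * s ≤ m := by
  by_contra! hlt
  set a := logb 2 m
  set t := logb 2 r
  have hs' : (1 : ℝ) ≤ s := by exact_mod_cast hs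
  have hm' : (m : ℝ) ≤ 2 * s - 1 := by
    have : ((m + 1 : ℕ) : ℝ) ≤ ((2 * s : ℕ) : ℝ) := by exact_mod_cast hlt
    push_cast at this; linarith
  have ha : 1 < a := by
    rw [← Real.logb_self_eq_one one_lt_two]
    exact Real.logb_lt_logb one_lt_two two_pos (by exact_mod_cast (by omega : 2 < m))
  have hx : 1 < s * a := by nlinarith
  have hr : (0 : ℝ) < r := by exact_mod_cast (Nat.one_le_pow _ _ (by omega)).trans hms
  have hsa : s * a ≤ t := by
    rw [← Real.logb_pow]
    exact Real.logb_le_logb_of_le one_lt_two (by positivity) (by exact_mod_cast hms)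
  have hlower : s * a * (1 + s * a) ≤ (1 + t) * t := by nlinarith
  have hupper : (1 + t) * t ≤ 2 * s * (s * a) - s * a - s ^ 2 + 1 := by
    have hlog := Real.logb_le_logb_of_le one_lt_two (by positivity) h
    rw [Real.logb_rpow_eq_mul_logb_of_pos hr, Real.logb_mul (by positivity) (by positivity),
      Real.logb_pow] at hlog
    have hmf := Real.logb_two_factorial_add_le (n := m) (by omega)
    have hsf := Real.logb_two_factorial_le_sq (n := s) (by omega)
    have hma : (m : ℝ) * (a - 1) ≤ (2 * s - 1) * (a - 1) := by gcongr
    nlinarith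
  nlinarith [sq_nonneg (s * a - s)]

theorem stmt_19_general {G : Type*} [Group G]
    (M : Subgroup G) (m s r : ℕ)
    (hm : 3 ≤ m) (hs : 1 ≤ s)
    (hG : Nat.card G ≤ (Nat.factorial m) ^ s * Nat.factorial s)
    (hms : m ^ s ≤ r)
    (hind : M.index ≤ 2 ^ s * Nat.factorial s)
    (hlow : (r : ℝ) ^ (1 + Real.logb 2 r) ≤ Nat.card G) :
    M.index ≤ r := by
  have hG' : (r : ℝ) ^ (1 + logb 2 r) ≤ (m ! : ℝ) ^ s * s ! := hlow.trans (by exact_mod_cast hG)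
  calc M.index ≤ 2 ^ s * s ! := hind
    _ ≤ m ^ s := Nat.two_pow_mul_factorial_le_pow
      (two_mul_le_of_rpow_one_add_logb_le_factorial hm hs hms hG')
    _ ≤ r := hms

/-- The index bound in Cameron–Maróti's theorem: from `m ≥ 3`, `s ≥ 1`,
`|G| ≤ (m!)^s·s!`, `m^s ≤ r`, `[G:M] ≤ 2^s·s!` and `|G| ≥ r^{1+log₂ r}`, one
deduces `[G:M] ≤ r`. -/
theorem stmt_19 {G : Type*} [Group G] [Finite G] {R : Type*} [Fintype R]
    [MulAction G R] (htrans : MulAction.IsPretransitive G R)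
    (M : Subgroup G) [M.Normal] (m s r : ℕ)
    (hr : Fintype.card R = r) (hm : 3 ≤ m) (hs : 1 ≤ s)
    (hG : Nat.card G ≤ (Nat.factorial m) ^ s * Nat.factorial s)
    (hms : m ^ s ≤ r)
    (hind : M.index ≤ 2 ^ s * Nat.factorial s)
    (hlow : (r : ℝ) ^ (1 + Real.logb 2 r) ≤ Nat.card G) :
    M.index ≤ r :=
  stmt_19_general M m s r hm hs hG hms hind hlow
end
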